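/- arXiv:math-ph/0505083 — 6 statements merged into one kernel-verified Lean document; each statement's English description precedes it below -/
import Mathlib

section
/- Let M > 0, N > 0, h > 0, and set t_k = k h for integers k ≥ 0. Let ℓ : [0, ∞) → ℝ² be a differentiable function with ‖ℓ(t)‖ ≥ 1/(2M) for all t ≥ 0. Assume: (a) for every t ∈ [0, t₁), if ‖ℓ(t) − ℓ(0)‖ ≥ 1/(M√N) then ℓ'(t) = 0; and (b) for every k ≥ 1 and t ∈ [t_k, t_{k+1}), if ‖ℓ(t) − ℓ(t_k)‖ ≥ 1/(M√N) or ℓ̂(t) · ℓ̂(t_{k−1}) ≤ 1 − 2/N, then ℓ'(t) = 0. Then for every k ≥ 0 and every t ∈ [t_k, t_{k+1}) one has ‖ℓ(t) − ℓ(t_k)‖ ≤ 1/(M√N), and for every k ≥ 1 and t ∈ [t_k, t_{k+1}) one has ℓ̂(t) · ℓ̂(t_{k−1}) ≥ 1 − 2/N. -/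
open scoped InnerProductSpace
open Set Filter Topology

lemma freeze {E : Type*} [NormedAddCommGroup E] [NormedSpace ℝ E]
    (f : ℝ → E) (g : ℝ → ℝ) (a b : ℝ) (hab : a ≤ b)
    (hf : ∀ s ∈ Icc a b, DifferentiableAt ℝ f s)
    (hg : ContinuousOn g (Icc a b))
    (hdep : ∀ s ∈ Icc a b, f s = f b → g s = g b)
    (hga : g a ≤ 0)
    (hzero : ∀ s ∈ Icc a b, 0 ≤ g s → deriv f s = 0) :
    g b ≤ 0 := by
  by_contra hgb
  push_neg at hgb
  set S : Set ℝ := Icc a b ∩ g ⁻¹' Iic 0 with hS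
  have haS : a ∈ S := ⟨⟨le_refl a, hab⟩, hga⟩
  have hSclosed : IsClosed S := hg.preimage_isClosed_of_isClosed isClosed_Icc isClosed_Iic
  have hSbdd : BddAbove S := ⟨b, fun s hs => hs.1.2⟩
  have hτS : sSup S ∈ S := hSclosed.csSup_mem ⟨a, haS⟩ hSbdd
  set τ := sSup S with hτ
  have hτab : τ ∈ Icc a b := hτS.1
  have hgτ : g τ ≤ 0 := hτS.2
  have hτb : τ < b := lt_of_le_of_ne hτab.2 (fun he => by rw [he] at hgτ; linarith)
  have hpos : ∀ s ∈ Ioc τ b, 0 < g s := by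
    intro s hs
    by_contra hc
    push_neg at hc
    have : s ∈ S := ⟨⟨hτab.1.trans hs.1.le, hs.2⟩, hc⟩
    exact absurd (le_csSup hSbdd this) (not_le.mpr hs.1)
  have hconst : ∀ s ∈ Ioc τ b, f s = f b := by
    intro s hs
    have hsub : Icc s b ⊆ Icc a b := Icc_subset_Icc (hτab.1.trans hs.1.le) le_rfl
    have key := norm_image_sub_le_of_norm_deriv_le_segment'
      (f := f) (a := s) (b := b) (f' := fun _ => (0 : E)) (C := 0)
      (fun x hx => by
        have hx' : x ∈ Icc a b := hsub hx
        have hd : deriv f x = 0 := hzero x hx' (hpos x ⟨lt_of_lt_of_le hs.1 hx.1, hx.2⟩).le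
        have := (hf x hx').hasDerivAt
        rw [hd] at this
        exact this.hasDerivWithinAt)
      (fun x _ => by simp) b (right_mem_Icc.mpr hs.2)
    simp only [zero_mul] at key
    have h0 : f b - f s = 0 := norm_le_zero_iff.mp (key.trans (by norm_num))
    exact (sub_eq_zero.mp h0).symm
  have hcf : ContinuousAt f τ := (hf τ hτab).continuousAt
  have hne : (𝓝[>] τ).NeBot := nhdsGT_neBot τ
  have hmem : Ioc τ b ∈ 𝓝[>] τ := by
    rw [mem_nhdsWithin]
    exact ⟨Iio b, isOpen_Iio, hτb, fun x hx => ⟨hx.2, hx.1.le⟩⟩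
  have h1 : Tendsto f (𝓝[>] τ) (𝓝 (f τ)) := hcf.continuousWithinAt
  have h2 : Tendsto f (𝓝[>] τ) (𝓝 (f b)) := by
    refine Tendsto.congr' ?_ tendsto_const_nhds
    filter_upwards [hmem] with s hs
    exact (hconst s hs).symm
  have hfτ : f τ = f b := tendsto_nhds_unique h1 h2
  have := hdep τ hτab hfτ
  rw [this] at hgτ
  linarith

lemma geom_align {E : Type*} [NormedAddCommGroup E] [InnerProductSpace ℝ E]
    (M N : ℝ) (hM : 0 < M) (hN : 0 < N) (x y : E)
    (hx : 1 / (2 * M) ≤ ‖x‖) (hy : 1 / (2 * M) ≤ ‖y‖)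
    (hxy : ‖x - y‖ ≤ 1 / (M * Real.sqrt N)) :
    1 - 2 / N ≤ ⟪‖x‖⁻¹ • x, ‖y‖⁻¹ • y⟫_ℝ := by
  have hA : (0:ℝ) < ‖x‖ := lt_of_lt_of_le (by positivity) hx
  have hB : (0:ℝ) < ‖y‖ := lt_of_lt_of_le (by positivity) hy
  set A := ‖x‖; set B := ‖y‖; set d := ‖x - y‖
  have hd0 : 0 ≤ d := norm_nonneg _
  have hsN : Real.sqrt N ^ 2 = N := Real.sq_sqrt hN.le
  have hsNpos : 0 < Real.sqrt N := Real.sqrt_pos.mpr hN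
  have hd2 : d ^ 2 ≤ 1 / (M ^ 2 * N) := by
    have := pow_le_pow_left₀ hd0 hxy 2
    rwa [div_pow, one_pow, mul_pow, hsN] at this
  have hd2' : d ^ 2 * (M ^ 2 * N) ≤ 1 := by
    rw [← le_div_iff₀ (by positivity)]; exact hd2
  have hA' : 1 ≤ 2 * M * A := by
    rw [div_le_iff₀ (by positivity)] at hx; linarith [hx]
  have hB' : 1 ≤ 2 * M * B := by
    rw [div_le_iff₀ (by positivity)] at hy; linarith [hy]
  have hABprod : (1:ℝ) * 1 ≤ (2 * M * A) * (2 * M * B) :=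
    mul_le_mul hA' hB' zero_le_one (by positivity)
  have hNd : N * d ^ 2 ≤ 4 * (A * B) := by
    nlinarith [hd2', hABprod, pow_pos hM 2]
  have hinner : ⟪x, y⟫_ℝ = (A ^ 2 + B ^ 2 - d ^ 2) / 2 := by
    have h := norm_sub_sq_real x y
    linarith
  have key : (1 - 2 / N) * (A * B) ≤ (A ^ 2 + B ^ 2 - d ^ 2) / 2 := by
    have e : (1 - 2 / N) = (N - 2) / N := by field_simp
    rw [e, div_mul_eq_mul_div, div_le_iff₀ hN]
    nlinarith [hNd, mul_nonneg hN.le (sq_nonneg (A - B))]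
  have hfin : 1 - 2 / N ≤ (A ^ 2 + B ^ 2 - d ^ 2) / 2 / (A * B) :=
    (le_div_iff₀ (by positivity)).mpr key
  have heq : A⁻¹ * (B⁻¹ * ((A ^ 2 + B ^ 2 - d ^ 2) / 2)) =
      (A ^ 2 + B ^ 2 - d ^ 2) / 2 / (A * B) := by
    rw [div_div, div_eq_mul_inv, div_eq_mul_inv, mul_inv]
    ring
  rw [real_inner_smul_left, real_inner_smul_right, hinner, heq]
  exact hfin


/-- Momentum alignment under the cut-off dynamics: if on each mesh interval
`[kh, (k+1)h)` the velocity `ℓ'` vanishes as soon as `‖ℓ(t) - ℓ(kh)‖ ≥ 1/(M√N)` or the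
direction of `ℓ(t)` turns from that of `ℓ((k-1)h)` by more than cosine `1 - 2/N`, then
on each mesh interval one has `‖ℓ(t) - ℓ(kh)‖ ≤ 1/(M√N)` and, for `k ≥ 1`,
`ℓ̂(t) · ℓ̂((k-1)h) ≥ 1 - 2/N`. -/
theorem cutoff_momentum_alignment (M N h : ℝ) (hM : 0 < M) (hN : 0 < N) (hh : 0 < h)
    (ℓ : ℝ → EuclideanSpace ℝ (Fin 2))
    (hdiff : ∀ t : ℝ, 0 ≤ t → DifferentiableAt ℝ ℓ t)
    (hnorm : ∀ t : ℝ, 0 ≤ t → 1 / (2 * M) ≤ ‖ℓ t‖)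
    (ha : ∀ t : ℝ, 0 ≤ t → t < h →
      1 / (M * Real.sqrt N) ≤ ‖ℓ t - ℓ 0‖ → deriv ℓ t = 0)
    (hb : ∀ k : ℕ, 1 ≤ k → ∀ t : ℝ, (k : ℝ) * h ≤ t → t < ((k : ℝ) + 1) * h →
      (1 / (M * Real.sqrt N) ≤ ‖ℓ t - ℓ ((k : ℝ) * h)‖ ∨
        ⟪‖ℓ t‖⁻¹ • ℓ t, ‖ℓ (((k : ℝ) - 1) * h)‖⁻¹ • ℓ (((k : ℝ) - 1) * h)⟫_ℝ ≤ 1 - 2 / N) →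
      deriv ℓ t = 0) :
    (∀ k : ℕ, ∀ t : ℝ, (k : ℝ) * h ≤ t → t < ((k : ℝ) + 1) * h →
      ‖ℓ t - ℓ ((k : ℝ) * h)‖ ≤ 1 / (M * Real.sqrt N)) ∧
    (∀ k : ℕ, 1 ≤ k → ∀ t : ℝ, (k : ℝ) * h ≤ t → t < ((k : ℝ) + 1) * h →
      1 - 2 / N ≤
        ⟪‖ℓ t‖⁻¹ • ℓ t, ‖ℓ (((k : ℝ) - 1) * h)‖⁻¹ • ℓ (((k : ℝ) - 1) * h)⟫_ℝ) := by
  have hsNpos : 0 < Real.sqrt N := Real.sqrt_pos.mpr hN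
  set δ : ℝ := 1 / (M * Real.sqrt N) with hδdef
  have hδpos : 0 < δ := by positivity
  -- Part 1
  have part1 : ∀ k : ℕ, ∀ t : ℝ, (k : ℝ) * h ≤ t → t < ((k : ℝ) + 1) * h →
      ‖ℓ t - ℓ ((k : ℝ) * h)‖ ≤ δ := by
    intro k t h1 h2
    have hk0 : (0:ℝ) ≤ (k : ℝ) * h := by positivity
    have ht0 : (0:ℝ) ≤ t := hk0.trans h1
    have hcont : ContinuousOn ℓ (Icc ((k:ℝ)*h) t) := fun s hs =>
      (hdiff s (hk0.trans hs.1)).continuousAt.continuousWithinAt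
    have := freeze ℓ (fun s => ‖ℓ s - ℓ ((k:ℝ)*h)‖ - δ) ((k:ℝ)*h) t h1
      (fun s hs => hdiff s (hk0.trans hs.1))
      (((hcont.sub continuousOn_const).norm).sub continuousOn_const)
      (fun s _ he => by simp only [he])
      (by simp [hδpos.le])
      (fun s hs hg => by
        have hs0 : 0 ≤ s := hk0.trans hs.1
        have hst : s < ((k:ℝ)+1) * h := lt_of_le_of_lt hs.2 h2
        have hg' : 0 ≤ ‖ℓ s - ℓ ((k:ℝ)*h)‖ - δ := hg
        have hge : δ ≤ ‖ℓ s - ℓ ((k:ℝ)*h)‖ := by linarith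
        rcases Nat.eq_zero_or_pos k with hk | hk
        · subst hk
          apply ha s hs0
          · simpa using hst
          · simpa using hge
        · exact hb k hk s hs.1 hst (Or.inl hge))
    simpa using this
  -- Part 1 at the closed right endpoint
  have part1' : ∀ k : ℕ, ‖ℓ (((k:ℝ)+1) * h) - ℓ ((k:ℝ)*h)‖ ≤ δ := by
    intro k
    set a : ℝ := (k:ℝ) * h
    set b : ℝ := ((k:ℝ)+1) * h
    have hab : a < b := by
      have : (k:ℝ) < (k:ℝ) + 1 := by linarith
      exact mul_lt_mul_of_pos_right this hh
    have hb0 : (0:ℝ) ≤ b := by positivity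
    have hcb : ContinuousAt (fun s => ‖ℓ s - ℓ a‖) b :=
      ((hdiff b hb0).continuousAt.sub continuousAt_const).norm
    haveI hne : (𝓝[Ico a b] b).NeBot := by
      refine mem_closure_iff_nhdsWithin_neBot.mp ?_
      rw [closure_Ico hab.ne]
      exact right_mem_Icc.mpr hab.le
    have htend : Tendsto (fun s => ‖ℓ s - ℓ a‖) (𝓝[Ico a b] b) (𝓝 (‖ℓ b - ℓ a‖)) :=
      hcb.continuousWithinAt
    refine le_of_tendsto htend ?_
    filter_upwards [self_mem_nhdsWithin] with s hs
    exact part1 k s hs.1 hs.2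
  refine ⟨part1, ?_⟩
  -- Part 2
  intro k hk t h1 h2
  have hk1 : (1:ℝ) ≤ (k:ℝ) := by exact_mod_cast hk
  have hk0 : (0:ℝ) ≤ (k : ℝ) * h := by positivity
  have hkm0 : (0:ℝ) ≤ ((k:ℝ) - 1) * h := mul_nonneg (by linarith) hh.le
  set v := ‖ℓ (((k : ℝ) - 1) * h)‖⁻¹ • ℓ (((k : ℝ) - 1) * h) with hv
  -- cast juggling: ((k-1 : ℕ) : ℝ) = (k : ℝ) - 1
  have hcast : (((k - 1 : ℕ) : ℝ)) = (k : ℝ) - 1 := by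
    have : 1 ≤ k := hk
    push_cast [this]
    ring
  have hstep : ‖ℓ ((k:ℝ) * h) - ℓ (((k:ℝ) - 1) * h)‖ ≤ δ := by
    have := part1' (k - 1)
    rw [hcast] at this
    have he : ((k:ℝ) - 1 + 1) = (k:ℝ) := by ring
    rwa [he] at this
  -- inner product bound at the left endpoint
  have hinit : 1 - 2 / N ≤ ⟪‖ℓ ((k:ℝ)*h)‖⁻¹ • ℓ ((k:ℝ)*h), v⟫_ℝ :=
    geom_align M N hM hN _ _ (hnorm _ hk0) (hnorm _ hkm0) hstep
  have hcont : ContinuousOn ℓ (Icc ((k:ℝ)*h) t) := fun s hs =>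
    (hdiff s (hk0.trans hs.1)).continuousAt.continuousWithinAt
  have hnz : ∀ s ∈ Icc ((k:ℝ)*h) t, ‖ℓ s‖ ≠ 0 := fun s hs =>
    ne_of_gt (lt_of_lt_of_le (by positivity) (hnorm s (hk0.trans hs.1)))
  have hcontg : ContinuousOn (fun s => (1 - 2/N) - ⟪‖ℓ s‖⁻¹ • ℓ s, v⟫_ℝ)
      (Icc ((k:ℝ)*h) t) := by
    refine continuousOn_const.sub (ContinuousOn.inner ?_ continuousOn_const)
    exact (hcont.norm.inv₀ hnz).smul hcont
  have := freeze ℓ (fun s => (1 - 2/N) - ⟪‖ℓ s‖⁻¹ • ℓ s, v⟫_ℝ) ((k:ℝ)*h) t h1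
    (fun s hs => hdiff s (hk0.trans hs.1))
    hcontg
    (fun s _ he => by simp only [he])
    (show (1 - 2/N) - ⟪‖ℓ ((k:ℝ)*h)‖⁻¹ • ℓ ((k:ℝ)*h), v⟫_ℝ ≤ 0 by linarith [hinit])
    (fun s hs hg => by
      have hst : s < ((k:ℝ)+1) * h := lt_of_le_of_lt hs.2 h2
      have hg' : 0 ≤ (1 - 2/N) - ⟪‖ℓ s‖⁻¹ • ℓ s, v⟫_ℝ := hg
      exact hb k hk s hs.1 hst (Or.inr (by linarith)))
  simpa using this
end

section
/- Let a < b, ρ > 0, N > 8, and let X : [a, b] → ℝ² be a differentiable curve such that ‖X'(t)‖ ≥ ρ for all t ∈ [a, b] and X'(t) · X'(s) ≥ (1 − 8/N) ‖X'(t)‖ ‖X'(s)‖ for all s, t ∈ [a, b]. Then X is injective on [a, b]; in fact, with u = X'(a)/‖X'(a)‖, the map t ↦ X(t) · u is strictly increasing with derivative at least ρ(1 − 8/N) > 0. -/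
open scoped InnerProductSpace

/-! Projecting onto the initial unit tangent `u`, the alignment hypothesis gives
`⟪X' t, u⟫ ≥ (1 - 8/N) ‖X' t‖ ≥ ρ (1 - 8/N) > 0`, so `t ↦ ⟪X t, u⟫` has positive derivative and is
strictly increasing; a curve with an injective projection is itself injective. -/

lemma le_inner_inv_norm_smul_of_le_inner {E : Type*} [NormedAddCommGroup E]
    [InnerProductSpace ℝ E] {v w : E} {c : ℝ} (hw : w ≠ 0) (h : c * ‖v‖ * ‖w‖ ≤ ⟪v, w⟫_ℝ) :
    c * ‖v‖ ≤ ⟪v, ‖w‖⁻¹ • w⟫_ℝ := by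
  rw [real_inner_smul_right, le_inv_mul_iff₀ (norm_pos_iff.mpr hw), mul_comm]
  exact h

lemma strictMonoOn_Icc_of_hasDerivAt_pos {f f' : ℝ → ℝ} {a b : ℝ}
    (hf : ∀ t ∈ Set.Icc a b, HasDerivAt f (f' t) t) (hf' : ∀ t ∈ Set.Icc a b, 0 < f' t) :
    StrictMonoOn f (Set.Icc a b) := by
  refine strictMonoOn_of_hasDerivWithinAt_pos (f' := f') (convex_Icc a b)
    (fun t ht ↦ (hf t ht).continuousAt.continuousWithinAt) (fun t ht ↦ ?_) (fun t ht ↦ ?_)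
  · exact (hf t (interior_subset ht)).hasDerivWithinAt
  · exact hf' t (interior_subset ht)

/-- A planar `C¹` curve whose tangent vectors are nonvanishing and pairwise aligned with
cosine at least `1 - 8/N` cannot intersect itself: it is injective, and its projection on
the initial unit tangent direction is strictly increasing with derivative at least
`ρ(1 - 8/N) > 0`. -/
theorem aligned_curve_no_self_intersection (a b ρ N : ℝ) (hab : a < b) (hρ : 0 < ρ)
    (hN : 8 < N)
    (X X' : ℝ → EuclideanSpace ℝ (Fin 2))
    (hX : ∀ t ∈ Set.Icc a b, HasDerivAt X (X' t) t)
    (hlow : ∀ t ∈ Set.Icc a b, ρ ≤ ‖X' t‖)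
    (halign : ∀ s ∈ Set.Icc a b, ∀ t ∈ Set.Icc a b,
      (1 - 8 / N) * ‖X' t‖ * ‖X' s‖ ≤ ⟪X' t, X' s⟫_ℝ) :
    Set.InjOn X (Set.Icc a b) ∧
    0 < ρ * (1 - 8 / N) ∧
    StrictMonoOn (fun t => ⟪X t, ‖X' a‖⁻¹ • X' a⟫_ℝ) (Set.Icc a b) ∧
    (∀ t ∈ Set.Icc a b, ρ * (1 - 8 / N) ≤ ⟪X' t, ‖X' a‖⁻¹ • X' a⟫_ℝ) := by
  have hcoef : 0 < 1 - 8 / N := by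
    rw [sub_pos, div_lt_one (by linarith)]
    exact hN
  have hc : 0 < ρ * (1 - 8 / N) := mul_pos hρ hcoef
  have ha : a ∈ Set.Icc a b := Set.left_mem_Icc.mpr hab.le
  have hXa : X' a ≠ 0 := norm_pos_iff.mp (hρ.trans_le (hlow a ha))
  set u := ‖X' a‖⁻¹ • X' a
  have hkey : ∀ t ∈ Set.Icc a b, ρ * (1 - 8 / N) ≤ ⟪X' t, u⟫_ℝ := fun t ht ↦
    calc ρ * (1 - 8 / N) ≤ (1 - 8 / N) * ‖X' t‖ := by
          rw [mul_comm]; exact mul_le_mul_of_nonneg_left (hlow t ht) hcoef.le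
      _ ≤ ⟪X' t, u⟫_ℝ := le_inner_inv_norm_smul_of_le_inner hXa (halign a ha t ht)
  have hderiv : ∀ t ∈ Set.Icc a b, HasDerivAt (fun t ↦ ⟪X t, u⟫_ℝ) ⟪X' t, u⟫_ℝ t := fun t ht ↦ by
    simpa using (hX t ht).inner ℝ (hasDerivAt_const t u)
  have hmono := strictMonoOn_Icc_of_hasDerivAt_pos hderiv fun t ht ↦ hc.trans_le (hkey t ht)
  exact ⟨Set.InjOn.of_comp (g := fun x ↦ ⟪x, u⟫_ℝ) hmono.injOn, hc, hmono, hkey⟩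
end

section
/- Let N₄ ≥ 1 and N₂ ≥ 9 N₄, let a < b, ρ > 0, and let γ : [a, b] → ℝ² be differentiable with ‖γ'(t)‖ ≥ ρ for all t. Suppose there is a unit vector e ∈ ℝ² with γ'(t) · e ≥ (1 − 1/N₂) ‖γ'(t)‖ for all t ∈ [a, b] (tangents aligned with e), and orthonormal vectors u, u⊥ ∈ ℝ² with |γ'(t) · u| ≤ (1 − 1/(4N₄)) ‖γ'(t)‖ for all t ∈ [a, b] (transversality to the direction u). Then for every x₀ ∈ ℝ² and w > 0, the one-dimensional Lebesgue measure of the set { t ∈ [a, b] : |(γ(t) − x₀) · u⊥| ≤ w } is at most 4 √N₄ · w / ρ. -/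
/-!
Write `p = uperp`. In the plane `⟪v, u⟫² + ⟪v, p⟫² = ‖v‖²`, so transversality gives
`⟪γ', p⟫² ≥ ‖γ'‖² / (4N₄)`: the speed of `f t = ⟪γ t - x₀, p⟫` is at least `ρ / (2√N₄)`.
Alignment puts every unit tangent within `√(2/N₂)` of `e`, so the `p`-components of two unit
tangents differ by at most `√(8/N₂) < 1/√N₄`; as each has absolute value at least `1/(2√N₄)`,
they have the same sign. Thus `f` is strictly monotone with slope at least `ρ / (2√N₄)`, and it spends
time at most `2w / (ρ / (2√N₄))` in `[-w, w]`.
-/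

open scoped InnerProductSpace

/-- If `A * B ≤ 0` then `(A - B)² ≥ (|A| + |B|)² ≥ 4δ`, whereas `(A - B)² ≤ 4κ` since both lie
within `√κ` of `c`. -/
theorem mul_pos_of_sq_sub_le_of_le_sq {A B c κ δ : ℝ} (hA : (A - c) ^ 2 ≤ κ) (hB : (B - c) ^ 2 ≤ κ)
    (hAδ : δ ≤ A ^ 2) (hBδ : δ ≤ B ^ 2) (hκδ : κ < δ) : 0 < A * B := by
  by_contra! hAB
  have hδ : 0 < δ := by nlinarith [sq_nonneg (A - c)]
  have hprod : δ ≤ -(A * B) := by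
    have : δ * δ ≤ A ^ 2 * B ^ 2 := mul_le_mul hAδ hBδ hδ.le (sq_nonneg A)
    nlinarith
  nlinarith [sq_nonneg (A + B - 2 * c)]

section InnerProductSpace

variable {E : Type*} [NormedAddCommGroup E] [InnerProductSpace ℝ E]

theorem inner_sq_add_inner_sq_eq_norm_sq (hE : Module.finrank ℝ E = 2) {u p : E}
    (hu : ‖u‖ = 1) (hp : ‖p‖ = 1) (hup : ⟪u, p⟫_ℝ = 0) (x : E) :
    ⟪x, u⟫_ℝ ^ 2 + ⟪x, p⟫_ℝ ^ 2 = ‖x‖ ^ 2 := by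
  have hon : Orthonormal ℝ ![u, p] := by simp [hu, hp, hup]
  have hspan := hon.linearIndependent.span_eq_top_of_card_eq_finrank (by simp [hE])
  simpa using (OrthonormalBasis.mk hon hspan.ge).sum_sq_inner_left x

theorem mul_norm_sq_le_inner_sq_of_abs_inner_le (hE : Module.finrank ℝ E = 2) {u p : E}
    (hu : ‖u‖ = 1) (hp : ‖p‖ = 1) (hup : ⟪u, p⟫_ℝ = 0) {δ : ℝ} (hδ : δ ≤ 1)
    {v : E} (hv : |⟪v, u⟫_ℝ| ≤ (1 - δ) * ‖v‖) :
    δ * ‖v‖ ^ 2 ≤ ⟪v, p⟫_ℝ ^ 2 := by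
  have hsq : ⟪v, u⟫_ℝ ^ 2 ≤ ((1 - δ) * ‖v‖) ^ 2 := sq_le_sq' (abs_le.1 hv).1 (abs_le.1 hv).2
  rcases lt_or_ge δ 0 with hδ₀ | hδ₀
  · nlinarith [sq_nonneg ‖v‖, sq_nonneg ⟪v, p⟫_ℝ]
  · nlinarith [inner_sq_add_inner_sq_eq_norm_sq hE hu hp hup v, mul_nonneg hδ₀ (sub_nonneg.2 hδ),
      sq_nonneg ‖v‖]

theorem norm_sub_norm_smul_sq_le {e v : E} (he : ‖e‖ = 1) {η : ℝ}
    (hv : (1 - η) * ‖v‖ ≤ ⟪v, e⟫_ℝ) : ‖v - ‖v‖ • e‖ ^ 2 ≤ 2 * η * ‖v‖ ^ 2 := by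
  rw [norm_sub_sq_real, norm_smul, real_inner_smul_right, norm_norm, he]
  nlinarith [norm_nonneg v]

theorem inner_sub_norm_mul_inner_sq_le {e v : E} (he : ‖e‖ = 1) {η : ℝ}
    (hv : (1 - η) * ‖v‖ ≤ ⟪v, e⟫_ℝ) {p : E} (hp : ‖p‖ = 1) :
    (⟪v, p⟫_ℝ - ‖v‖ * ⟪e, p⟫_ℝ) ^ 2 ≤ 2 * η * ‖v‖ ^ 2 := by
  calc (⟪v, p⟫_ℝ - ‖v‖ * ⟪e, p⟫_ℝ) ^ 2 = ⟪v - ‖v‖ • e, p⟫_ℝ ^ 2 := by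
        rw [inner_sub_left, real_inner_smul_left]
    _ ≤ ‖v - ‖v‖ • e‖ ^ 2 := by
        rw [← sq_abs]
        simpa [hp] using pow_le_pow_left₀ (abs_nonneg _) (abs_real_inner_le_norm (v - ‖v‖ • e) p) 2
    _ ≤ 2 * η * ‖v‖ ^ 2 := norm_sub_norm_smul_sq_le he hv

theorem inner_mul_inner_pos_of_aligned_of_transversal (hE : Module.finrank ℝ E = 2)
    {e u p : E} (he : ‖e‖ = 1) (hu : ‖u‖ = 1) (hp : ‖p‖ = 1) (hup : ⟪u, p⟫_ℝ = 0)
    {η δ : ℝ} (hδ : δ ≤ 1) (hηδ : 2 * η < δ)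
    {v w : E} (hv : v ≠ 0) (hw : w ≠ 0)
    (hve : (1 - η) * ‖v‖ ≤ ⟪v, e⟫_ℝ) (hwe : (1 - η) * ‖w‖ ≤ ⟪w, e⟫_ℝ)
    (hvu : |⟪v, u⟫_ℝ| ≤ (1 - δ) * ‖v‖) (hwu : |⟪w, u⟫_ℝ| ≤ (1 - δ) * ‖w‖) :
    0 < ⟪v, p⟫_ℝ * ⟪w, p⟫_ℝ := by
  have normalized : ∀ x : E, x ≠ 0 → (1 - η) * ‖x‖ ≤ ⟪x, e⟫_ℝ → |⟪x, u⟫_ℝ| ≤ (1 - δ) * ‖x‖ →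
      (⟪x, p⟫_ℝ / ‖x‖ - ⟪e, p⟫_ℝ) ^ 2 ≤ 2 * η ∧ δ ≤ (⟪x, p⟫_ℝ / ‖x‖) ^ 2 := by
    intro x hx hxe hxu
    have hx2 : 0 < ‖x‖ ^ 2 := by positivity
    constructor
    · rw [div_sub' (norm_ne_zero_iff.2 hx), div_pow, div_le_iff₀ hx2]
      simpa [mul_comm] using inner_sub_norm_mul_inner_sq_le he hxe hp
    · rw [div_pow, le_div_iff₀ hx2]
      exact mul_norm_sq_le_inner_sq_of_abs_inner_le hE hu hp hup hδ hxu
  obtain ⟨hvc, hvδ⟩ := normalized v hv hve hvu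
  obtain ⟨hwc, hwδ⟩ := normalized w hw hwe hwu
  have := mul_pos_of_sq_sub_le_of_le_sq hvc hwc hvδ hwδ hηδ
  rw [div_mul_div_comm] at this
  exact (div_pos_iff_of_pos_right (by positivity)).1 this

end InnerProductSpace

section Tube

open MeasureTheory Set

theorem volume_abs_le_of_le_deriv {f f' : ℝ → ℝ} {a b c : ℝ} (hc : 0 < c)
    (hf : ∀ t ∈ Icc a b, HasDerivAt f (f' t) t) (hf' : ∀ t ∈ Icc a b, c ≤ f' t) (w : ℝ) :
    volume {t | t ∈ Icc a b ∧ |f t| ≤ w} ≤ ENNReal.ofReal (2 * w / c) := by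
  have growth : ∀ s ∈ Icc a b, ∀ t ∈ Icc a b, s ≤ t → c * (t - s) ≤ f t - f s := by
    refine (convex_Icc a b).mul_sub_le_image_sub_of_le_deriv
      (fun t ht ↦ (hf t ht).continuousAt.continuousWithinAt) ?_ ?_ <;>
      rw [interior_Icc]
    · exact fun t ht ↦ (hf t (Ioo_subset_Icc_self ht)).differentiableAt.differentiableWithinAt
    · exact fun t ht ↦ (hf t (Ioo_subset_Icc_self ht)).deriv ▸ hf' t (Ioo_subset_Icc_self ht)
  have close : ∀ s ∈ {t | t ∈ Icc a b ∧ |f t| ≤ w}, ∀ t ∈ {t | t ∈ Icc a b ∧ |f t| ≤ w},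
      s ≤ t → t - s ≤ 2 * w / c := by
    rintro s ⟨hs, hfs⟩ t ⟨ht, hft⟩ hst
    rw [le_div_iff₀ hc]
    have := growth s hs t ht hst
    linarith [abs_le.1 hfs, abs_le.1 hft]
  refine (Real.volume_le_diam _).trans (Metric.ediam_le fun s hs t ht ↦ ?_)
  rw [edist_dist, Real.dist_eq]
  refine ENNReal.ofReal_le_ofReal ?_
  rcases le_total s t with hst | hts
  · rw [abs_sub_comm, abs_of_nonneg (sub_nonneg.2 hst)]; exact close s hs t ht hst
  · rw [abs_of_nonneg (sub_nonneg.2 hts)]; exact close t ht s hs hts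

theorem volume_abs_le_of_le_abs_deriv {f f' : ℝ → ℝ} {a b c : ℝ} (hc : 0 < c)
    (hf : ∀ t ∈ Icc a b, HasDerivAt f (f' t) t) (hf' : ∀ t ∈ Icc a b, c ≤ |f' t|)
    (hsign : ∀ s ∈ Icc a b, ∀ t ∈ Icc a b, 0 < f' s * f' t) (w : ℝ) :
    volume {t | t ∈ Icc a b ∧ |f t| ≤ w} ≤ ENNReal.ofReal (2 * w / c) := by
  by_cases hpos : ∀ t ∈ Icc a b, 0 < f' t
  · exact volume_abs_le_of_le_deriv hc hf (fun t ht ↦ abs_of_pos (hpos t ht) ▸ hf' t ht) w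
  push Not at hpos
  obtain ⟨t₀, ht₀, hf't₀⟩ := hpos
  have hneg : ∀ t ∈ Icc a b, f' t < 0 := fun t ht ↦
    neg_of_mul_pos_right (hsign t₀ ht₀ t ht) hf't₀
  simpa using volume_abs_le_of_le_deriv hc (fun t ht ↦ (hf t ht).neg)
    (fun t ht ↦ abs_of_neg (hneg t ht) ▸ hf' t ht) w

end Tube

theorem time_in_tube_general (N₂ N₄ a b ρ : ℝ) (hN₄ : 1 ≤ N₄) (hN₂ : 9 * N₄ ≤ N₂)
    (hρ : 0 < ρ)
    (γ γ' : ℝ → EuclideanSpace ℝ (Fin 2))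
    (hγ : ∀ t ∈ Set.Icc a b, HasDerivAt γ (γ' t) t)
    (hlow : ∀ t ∈ Set.Icc a b, ρ ≤ ‖γ' t‖)
    (e u uperp : EuclideanSpace ℝ (Fin 2))
    (he : ‖e‖ = 1) (hu : ‖u‖ = 1) (huperp : ‖uperp‖ = 1)
    (horth : ⟪u, uperp⟫_ℝ = 0)
    (halign : ∀ t ∈ Set.Icc a b, (1 - 1 / N₂) * ‖γ' t‖ ≤ ⟪γ' t, e⟫_ℝ)
    (htrans : ∀ t ∈ Set.Icc a b, |⟪γ' t, u⟫_ℝ| ≤ (1 - 1 / (4 * N₄)) * ‖γ' t‖) :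
    ∀ (x₀ : EuclideanSpace ℝ (Fin 2)) (w : ℝ), 0 < w →
      MeasureTheory.volume {t | t ∈ Set.Icc a b ∧ |⟪γ t - x₀, uperp⟫_ℝ| ≤ w}
        ≤ ENNReal.ofReal (4 * Real.sqrt N₄ * w / ρ) := by
  intro x₀ w _
  have hN₄₀ : 0 < N₄ := by linarith
  have hδ : 1 / (4 * N₄) ≤ 1 := by rw [div_le_one (by positivity)]; linarith
  have hηδ : 2 * (1 / N₂) < 1 / (4 * N₄) := by
    rw [mul_one_div, div_lt_div_iff₀ (by linarith) (by positivity)]; linarith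
  have hE : Module.finrank ℝ (EuclideanSpace ℝ (Fin 2)) = 2 := finrank_euclideanSpace_fin
  have hγ'₀ : ∀ t ∈ Set.Icc a b, γ' t ≠ 0 := fun t ht ↦
    norm_pos_iff.1 (hρ.trans_le (hlow t ht))
  have hspeed : ∀ t ∈ Set.Icc a b, ρ / (2 * √N₄) ≤ |⟪γ' t, uperp⟫_ℝ| := by
    intro t ht
    rw [← abs_of_pos (by positivity : 0 < ρ / (2 * √N₄))]
    refine sq_le_sq.1 ?_
    calc (ρ / (2 * √N₄)) ^ 2 = 1 / (4 * N₄) * ρ ^ 2 := by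
          rw [div_pow, mul_pow, Real.sq_sqrt hN₄₀.le]; ring
      _ ≤ 1 / (4 * N₄) * ‖γ' t‖ ^ 2 := by gcongr; exact hlow t ht
      _ ≤ ⟪γ' t, uperp⟫_ℝ ^ 2 :=
        mul_norm_sq_le_inner_sq_of_abs_inner_le hE hu huperp horth hδ (htrans t ht)
  calc _ ≤ ENNReal.ofReal (2 * w / (ρ / (2 * √N₄))) :=
        volume_abs_le_of_le_abs_deriv (by positivity)
          (fun t ht ↦ by simpa using ((hγ t ht).sub_const x₀).inner ℝ (hasDerivAt_const t uperp))
          hspeed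
          (fun s hs t ht ↦ inner_mul_inner_pos_of_aligned_of_transversal hE he hu huperp horth hδ
            hηδ (hγ'₀ s hs) (hγ'₀ t ht) (halign s hs) (halign t ht) (htrans s hs) (htrans t ht)) w
    _ = ENNReal.ofReal (4 * √N₄ * w / ρ) := by congr 1; field_simp; ring

/-- Time-in-a-tube bound: a planar curve whose tangent directions are aligned with a
fixed unit vector `e` at level `1 - 1/N₂` and transversal to a direction `u` at level
`1 - 1/(4N₄)` (with `N₂ ≥ 9N₄`) spends, inside any tube of width `w` in the direction
`u` (i.e. the set where the `u⊥` coordinate is within `w` of a fixed value), a time of at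
most `4√N₄ w/ρ`, where `ρ` is a lower bound for the speed. -/
theorem time_in_tube (N₂ N₄ a b ρ : ℝ) (hN₄ : 1 ≤ N₄) (hN₂ : 9 * N₄ ≤ N₂)
    (hab : a < b) (hρ : 0 < ρ)
    (γ γ' : ℝ → EuclideanSpace ℝ (Fin 2))
    (hγ : ∀ t ∈ Set.Icc a b, HasDerivAt γ (γ' t) t)
    (hlow : ∀ t ∈ Set.Icc a b, ρ ≤ ‖γ' t‖)
    (e u uperp : EuclideanSpace ℝ (Fin 2))
    (he : ‖e‖ = 1) (hu : ‖u‖ = 1) (huperp : ‖uperp‖ = 1)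
    (horth : ⟪u, uperp⟫_ℝ = 0)
    (halign : ∀ t ∈ Set.Icc a b, (1 - 1 / N₂) * ‖γ' t‖ ≤ ⟪γ' t, e⟫_ℝ)
    (htrans : ∀ t ∈ Set.Icc a b, |⟪γ' t, u⟫_ℝ| ≤ (1 - 1 / (4 * N₄)) * ‖γ' t‖) :
    ∀ (x₀ : EuclideanSpace ℝ (Fin 2)) (w : ℝ), 0 < w →
      MeasureTheory.volume {t | t ∈ Set.Icc a b ∧ |⟪γ t - x₀, uperp⟫_ℝ| ≤ w}
        ≤ ENNReal.ofReal (4 * Real.sqrt N₄ * w / ρ) :=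
  time_in_tube_general N₂ N₄ a b ρ hN₄ hN₂ hρ γ γ' hγ hlow e u uperp he hu huperp horth halign
    htrans
end

section
/- Let (Ω, F, P) be a probability space, let 𝒜 and ℬ be sub-σ-algebras of F, and let φ ≥ 0 satisfy |P(B) − P(B | A)| ≤ φ for every A ∈ 𝒜 with P(A) > 0 and every B ∈ ℬ. Then for every bounded 𝒜-measurable random variable X and every bounded ℬ-measurable random variable Y, | E[X Y] − E[X] E[Y] | ≤ 2 φ ‖X‖_∞ ‖Y‖_∞. -/
open MeasureTheory

/-!
Conditioning on `A ∈ 𝒜` moves the probability of every `B ∈ ℬ` by at most `φ`, so by the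
layer-cake formula it moves the mean of a `ℬ`-measurable `Y` with values in `[-CY, CY]` by at
most `2 φ CY`. Hence, with `Z = E[Y | 𝒜]`, the integral of `Z - E[Y]` over any `A ∈ 𝒜` is at
most `2 φ CY P(A)` in absolute value, and splitting `Ω` along the `𝒜`-set `{Z ≥ E[Y]}` gives
`E|Z - E[Y]| ≤ 2 φ CY`. Finally `E[XY] - E[X] E[Y] = E[X (Z - E[Y])]` by the tower property.
-/

open Set

section

variable {Ω : Type*} {m mΩ : MeasurableSpace Ω}

theorem abs_integral_sub_integral_le_mul_of_superlevelSets (P Q : Measure Ω)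
    [IsFiniteMeasure P] [IsFiniteMeasure Q] {g : Ω → ℝ} (hg : Measurable g) {M ε : ℝ}
    (hM : 0 ≤ M) (hg0 : ∀ ω, 0 ≤ g ω) (hgM : ∀ ω, g ω ≤ M)
    (hε : ∀ t, |P.real {ω | t ≤ g ω} - Q.real {ω | t ≤ g ω}| ≤ ε) :
    |∫ ω, g ω ∂P - ∫ ω, g ω ∂Q| ≤ ε * M := by
  have layercake (ν : Measure Ω) [IsFiniteMeasure ν] :
      (∫ ω, g ω ∂ν) = ∫ t in Ioc 0 M, ν.real {ω | t ≤ g ω} :=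
    (Integrable.of_bound hg.aestronglyMeasurable M (ae_of_all _ fun ω ↦ by
      simpa [abs_of_nonneg (hg0 ω)] using hgM ω)).integral_eq_integral_Ioc_meas_le
      (ae_of_all _ hg0) (ae_of_all _ hgM)
  have tail_integrableOn (ν : Measure Ω) [IsFiniteMeasure ν] :
      IntegrableOn (fun t ↦ ν.real {ω | t ≤ g ω}) (Ioc 0 M) := by
    have tail_antitone : Antitone fun t ↦ ν.real {ω | t ≤ g ω} :=
      fun _ _ hst ↦ measureReal_mono fun _ h ↦ hst.trans h
    refine Measure.integrableOn_of_bounded (M := ν.real univ) measure_Ioc_lt_top.ne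
      tail_antitone.measurable.aestronglyMeasurable (ae_of_all _ fun t ↦ ?_)
    rw [Real.norm_eq_abs, abs_of_nonneg measureReal_nonneg]
    exact measureReal_mono (subset_univ _)
  rw [layercake P, layercake Q, ← integral_sub (tail_integrableOn P) (tail_integrableOn Q)]
  have hdiff : ∀ t ∈ Ioc 0 M, ‖P.real {ω | t ≤ g ω} - Q.real {ω | t ≤ g ω}‖ ≤ ε :=
    fun t _ ↦ hε t
  simpa [Real.volume_real_Ioc_of_le hM] using
    norm_setIntegral_le_of_norm_le_const (μ := volume) measure_Ioc_lt_top hdiff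

theorem abs_integral_sub_integral_le_of_abs_measureReal_sub_le
    (hm : m ≤ mΩ) (P Q : Measure Ω) [IsFiniteMeasure P] [IsFiniteMeasure Q]
    (hPQ : P univ = Q univ) {ε : ℝ} (hε : ∀ B, MeasurableSet[m] B → |P.real B - Q.real B| ≤ ε)
    {g : Ω → ℝ} (hg : Measurable[m] g) {C : ℝ} (hC : 0 ≤ C) (hgC : ∀ ω, |g ω| ≤ C) :
    |∫ ω, g ω ∂P - ∫ ω, g ω ∂Q| ≤ 2 * ε * C := by
  have hg' : Measurable g := hg.mono hm le_rfl
  have hint (ν : Measure Ω) [IsFiniteMeasure ν] : Integrable g ν :=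
    .of_bound hg'.aestronglyMeasurable C (ae_of_all _ hgC)
  have hshift : ∫ ω, (g ω + C) ∂P - ∫ ω, (g ω + C) ∂Q = ∫ ω, g ω ∂P - ∫ ω, g ω ∂Q := by
    rw [integral_add (hint P) (integrable_const C), integral_add (hint Q) (integrable_const C),
      integral_const, integral_const, measureReal_def, measureReal_def, hPQ]
    ring
  have hbound := abs_integral_sub_integral_le_mul_of_superlevelSets P Q (M := 2 * C)
    (hg'.add_const C) (by linarith) (fun ω ↦ by linarith [(abs_le.1 (hgC ω)).1])
    (fun ω ↦ by linarith [(abs_le.1 (hgC ω)).2])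
    (fun t ↦ hε _ ((hg.add_const C) measurableSet_Ici))
  rw [hshift] at hbound
  linarith

theorem abs_measureReal_inter_sub_mul_le_of_abs_sub_div_le (μ : Measure Ω) [IsFiniteMeasure μ]
    {A B : Set Ω} {φ : ℝ}
    (h : 0 < μ A → |μ.real B - μ.real (A ∩ B) / μ.real A| ≤ φ) :
    |μ.real (A ∩ B) - μ.real A * μ.real B| ≤ φ * μ.real A := by
  rcases eq_zero_or_pos (μ A) with hA0 | hApos
  · have hAB0 : μ (A ∩ B) = 0 := measure_mono_null inter_subset_left hA0
    simp [measureReal_def, hA0, hAB0]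
  have hApos' : 0 < μ.real A := ENNReal.toReal_pos hApos.ne' (measure_ne_top μ A)
  have hfactor : μ.real (A ∩ B) - μ.real A * μ.real B
      = -(μ.real A * (μ.real B - μ.real (A ∩ B) / μ.real A)) := by
    field_simp
    ring
  rw [hfactor, abs_neg, abs_mul, abs_of_pos hApos', mul_comm φ]
  exact mul_le_mul_of_nonneg_left (h hApos) hApos'.le

theorem abs_setIntegral_sub_measureReal_mul_integral_le (hm : m ≤ mΩ)
    (μ : Measure Ω) [IsProbabilityMeasure μ] {A : Set Ω} {φ : ℝ}
    (hA : ∀ B, MeasurableSet[m] B → |μ.real (A ∩ B) - μ.real A * μ.real B| ≤ φ * μ.real A)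
    {Y : Ω → ℝ} (hY : Measurable[m] Y) {C : ℝ} (hC : 0 ≤ C) (hYC : ∀ ω, |Y ω| ≤ C) :
    |∫ ω in A, Y ω ∂μ - μ.real A * ∫ ω, Y ω ∂μ| ≤ 2 * φ * C * μ.real A := by
  -- compare `μ.restrict A` with `μ A • μ`: both have mass `μ A`
  have : IsFiniteMeasure (μ A • μ) :=
    ⟨ENNReal.mul_lt_top (measure_lt_top μ A) (measure_lt_top μ univ)⟩
  have hmass : μ.restrict A univ = (μ A • μ) univ := by simp
  have hsets : ∀ B, MeasurableSet[m] B →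
      |(μ.restrict A).real B - (μ A • μ).real B| ≤ φ * μ.real A := fun B hB ↦ by
    rw [measureReal_restrict_apply (hm B hB), measureReal_ennreal_smul_apply, inter_comm,
      ← measureReal_def]
    exact hA B hB
  have := abs_integral_sub_integral_le_of_abs_measureReal_sub_le hm _ _ hmass hsets hY hC hYC
  rw [integral_smul_measure, smul_eq_mul, ← measureReal_def] at this
  linarith

theorem integral_abs_le_of_abs_setIntegral_le (hm : m ≤ mΩ) (μ : Measure Ω) [IsFiniteMeasure μ]
    {f : Ω → ℝ} (hfm : StronglyMeasurable[m] f) (hf : Integrable f μ) {K : ℝ}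
    (hK : ∀ A, MeasurableSet[m] A → |∫ ω in A, f ω ∂μ| ≤ K * μ.real A) :
    ∫ ω, |f ω| ∂μ ≤ K * μ.real univ := by
  set S := {ω | 0 ≤ f ω}
  have hS : MeasurableSet[m] S := hfm.measurable measurableSet_Ici
  have hpos : ∫ ω in S, |f ω| ∂μ = ∫ ω in S, f ω ∂μ :=
    setIntegral_congr_fun (hm _ hS) fun ω hω ↦ abs_of_nonneg hω
  have hneg : ∫ ω in Sᶜ, |f ω| ∂μ = -∫ ω in Sᶜ, f ω ∂μ := by
    rw [← integral_neg]
    exact setIntegral_congr_fun (hm _ hS).compl fun ω hω ↦ abs_of_neg (not_le.1 hω)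
  calc ∫ ω, |f ω| ∂μ = ∫ ω in S, f ω ∂μ + -∫ ω in Sᶜ, f ω ∂μ := by
        rw [← integral_add_compl (hm _ hS) hf.abs, hpos, hneg]
    _ ≤ K * μ.real S + K * μ.real Sᶜ :=
        add_le_add ((le_abs_self _).trans (hK S hS)) ((neg_le_abs _).trans (hK _ hS.compl))
    _ = K * μ.real univ := by rw [← mul_add, measureReal_add_measureReal_compl (hm _ hS)]

theorem abs_integral_mul_sub_le_mul_integral_abs_condExp_sub (hm : m ≤ mΩ) (μ : Measure Ω)
    [IsFiniteMeasure μ] {X Y : Ω → ℝ} (hX : StronglyMeasurable[m] X) {C : ℝ}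
    (hXC : ∀ ω, |X ω| ≤ C) (hY : Integrable Y μ) :
    |∫ ω, X ω * Y ω ∂μ - (∫ ω, X ω ∂μ) * ∫ ω, Y ω ∂μ|
      ≤ C * ∫ ω, |μ[Y|m] ω - ∫ ω', Y ω' ∂μ| ∂μ := by
  set c := ∫ ω, Y ω ∂μ
  have hXbdd : ∀ᵐ ω ∂μ, ‖X ω‖ ≤ C := ae_of_all _ hXC
  have hXint : Integrable X μ := .of_bound (hX.mono hm).aestronglyMeasurable C hXbdd
  have hW : Integrable (fun ω ↦ μ[Y|m] ω - c) μ := integrable_condExp.sub (integrable_const c)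
  have htower : ∫ ω, X ω * Y ω ∂μ = ∫ ω, X ω * μ[Y|m] ω ∂μ := by
    rw [← integral_condExp hm]
    exact integral_congr_ae (condExp_mul_of_stronglyMeasurable_left hX
      (hY.bdd_mul (hX.mono hm).aestronglyMeasurable hXbdd) hY)
  have hcentered : ∫ ω, X ω * Y ω ∂μ - (∫ ω, X ω ∂μ) * c = ∫ ω, X ω * (μ[Y|m] ω - c) ∂μ := by
    rw [htower, ← integral_mul_const, ← integral_sub
      (integrable_condExp.bdd_mul (hX.mono hm).aestronglyMeasurable hXbdd) (hXint.mul_const c)]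
    simp only [mul_sub]
  calc |∫ ω, X ω * Y ω ∂μ - (∫ ω, X ω ∂μ) * c| ≤ ∫ ω, |X ω * (μ[Y|m] ω - c)| ∂μ := by
        rw [hcentered]; exact abs_integral_le_integral_abs
    _ ≤ ∫ ω, C * |μ[Y|m] ω - c| ∂μ :=
        integral_mono_of_nonneg (ae_of_all _ fun _ ↦ abs_nonneg _) (hW.abs.const_mul C)
          (ae_of_all _ fun ω ↦ by
            dsimp only
            rw [abs_mul]
            exact mul_le_mul_of_nonneg_right (hXC ω) (abs_nonneg _))
    _ = C * ∫ ω, |μ[Y|m] ω - c| ∂μ := integral_const_mul C _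

end

theorem mixing_covariance_inequality_general {Ω : Type*} [F : MeasurableSpace Ω]
    (μ : Measure Ω) [IsProbabilityMeasure μ]
    (𝒜 ℬ : MeasurableSpace Ω) (h𝒜 : 𝒜 ≤ F) (hℬ : ℬ ≤ F)
    (φ : ℝ)
    (hmix : ∀ A B : Set Ω, MeasurableSet[𝒜] A → MeasurableSet[ℬ] B → 0 < μ A →
      |(μ B).toReal - (μ (A ∩ B)).toReal / (μ A).toReal| ≤ φ)
    (X Y : Ω → ℝ) (hX : Measurable[𝒜] X) (hY : Measurable[ℬ] Y)
    (CX CY : ℝ) (hCX : 0 ≤ CX) (hCY : 0 ≤ CY)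
    (hXb : ∀ ω, |X ω| ≤ CX) (hYb : ∀ ω, |Y ω| ≤ CY) :
    |(∫ ω, X ω * Y ω ∂μ) - (∫ ω, X ω ∂μ) * ∫ ω, Y ω ∂μ| ≤ 2 * φ * CX * CY := by
  have hYint : Integrable Y μ :=
    .of_bound (hY.mono hℬ le_rfl).aestronglyMeasurable CY (ae_of_all _ hYb)
  have hset (A : Set Ω) (hA : MeasurableSet[𝒜] A) :
      |∫ ω in A, (μ[Y|𝒜] ω - ∫ ω', Y ω' ∂μ) ∂μ| ≤ 2 * φ * CY * μ.real A := by
    rw [integral_sub integrable_condExp.integrableOn (integrable_const _),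
      setIntegral_condExp h𝒜 hYint hA, setIntegral_const, smul_eq_mul]
    exact abs_setIntegral_sub_measureReal_mul_integral_le hℬ μ
      (fun B hB ↦ abs_measureReal_inter_sub_mul_le_of_abs_sub_div_le μ (hmix A B hA hB)) hY hCY hYb
  calc _ ≤ CX * ∫ ω, |μ[Y|𝒜] ω - ∫ ω', Y ω' ∂μ| ∂μ :=
        abs_integral_mul_sub_le_mul_integral_abs_condExp_sub h𝒜 μ hX.stronglyMeasurable hXb hYint
    _ ≤ CX * (2 * φ * CY * μ.real univ) := by
        gcongr
        exact integral_abs_le_of_abs_setIntegral_le h𝒜 μ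
          (stronglyMeasurable_condExp.sub stronglyMeasurable_const)
          (integrable_condExp.sub (integrable_const _)) hset
    _ = 2 * φ * CX * CY := by rw [probReal_univ]; ring

/-- Covariance inequality for uniformly mixing σ-algebras: if
`|P(B) - P(B|A)| ≤ φ` for all `A ∈ 𝒜` with `P(A) > 0` and all `B ∈ ℬ`, then for bounded
`𝒜`-measurable `X` and bounded `ℬ`-measurable `Y`,
`|E[XY] - E[X]E[Y]| ≤ 2φ ‖X‖_∞ ‖Y‖_∞`. -/
theorem mixing_covariance_inequality {Ω : Type*} [F : MeasurableSpace Ω]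
    (μ : Measure Ω) [IsProbabilityMeasure μ]
    (𝒜 ℬ : MeasurableSpace Ω) (h𝒜 : 𝒜 ≤ F) (hℬ : ℬ ≤ F)
    (φ : ℝ) (hφ : 0 ≤ φ)
    (hmix : ∀ A B : Set Ω, MeasurableSet[𝒜] A → MeasurableSet[ℬ] B → 0 < μ A →
      |(μ B).toReal - (μ (A ∩ B)).toReal / (μ A).toReal| ≤ φ)
    (X Y : Ω → ℝ) (hX : Measurable[𝒜] X) (hY : Measurable[ℬ] Y)
    (CX CY : ℝ) (hCX : 0 ≤ CX) (hCY : 0 ≤ CY)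
    (hXb : ∀ ω, |X ω| ≤ CX) (hYb : ∀ ω, |Y ω| ≤ CY) :
    |(∫ ω, X ω * Y ω ∂μ) - (∫ ω, X ω ∂μ) * ∫ ω, Y ω ∂μ| ≤ 2 * φ * CX * CY :=
  mixing_covariance_inequality_general (F := F) μ 𝒜 ℬ h𝒜 hℬ φ hmix X Y hX hY CX CY hCX hCY hXb hYb
end

section
/- Let (Ω, F, P) be a probability space with a filtration F₀ ⊆ F₁ ⊆ ... ⊆ F_K, and let 0 = τ₀ ≤ τ₁ ≤ ... ≤ τ_K be random variables such that τ_n is F_n-measurable for each n. Suppose there is γ ∈ (0, 1] with E[ e^{−(τ_{n+1} − τ_n)} | F_n ] ≤ γ almost surely for every 0 ≤ n < K. Then for every T ≥ 0, P[ τ_K ≤ T ] ≤ e^T γ^K. -/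
/-!
Since `e^{-τ_{n+1}} = e^{-τ_n} e^{-(τ_{n+1} - τ_n)}` and `e^{-τ_n}` is `F_n`-measurable, conditioning
on `F_n` gives `E[e^{-τ_{n+1}}] ≤ γ E[e^{-τ_n}]`, hence `E[e^{-τ_K}] ≤ γ^K`. The Chernoff bound
`P[τ_K ≤ T] ≤ e^T E[e^{-τ_K}]` concludes. Monotonicity makes `τ_n ≥ 0` and every increment
nonnegative, so all exponentials involved are bounded by `1` and hence integrable.
-/

open MeasureTheory ProbabilityTheory Real

section

variable {Ω : Type*} {m m0 : MeasurableSpace Ω} {μ : Measure Ω} [IsFiniteMeasure μ]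

theorem integrable_exp_neg_of_nonneg {X : Ω → ℝ} (hX : Measurable X) (hX0 : 0 ≤ X) :
    Integrable (fun ω => exp (-X ω)) μ :=
  (integrable_const (1 : ℝ)).mono' (measurable_exp.comp hX.neg).aestronglyMeasurable
    (.of_forall fun ω => by simpa [abs_of_pos (exp_pos _)] using hX0 ω)

theorem integral_mul_le_of_condExp_le {g d : Ω → ℝ} {C γ : ℝ} (hm : m ≤ m0)
    (hg : StronglyMeasurable[m] g) (hg0 : 0 ≤ g) (hgC : ∀ ω, ‖g ω‖ ≤ C)
    (hd : Integrable d μ) (hdγ : ∀ᵐ ω ∂μ, μ[d | m] ω ≤ γ) :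
    ∫ ω, g ω * d ω ∂μ ≤ γ * ∫ ω, g ω ∂μ := by
  have hg_ae : AEStronglyMeasurable g μ := (hg.mono hm).aestronglyMeasurable
  have hgd : Integrable (g * d) μ := hd.bdd_mul hg_ae (.of_forall hgC)
  calc ∫ ω, g ω * d ω ∂μ = ∫ ω, μ[g * d | m] ω ∂μ := (integral_condExp hm).symm
    _ = ∫ ω, g ω * μ[d | m] ω ∂μ :=
        integral_congr_ae (condExp_mul_of_stronglyMeasurable_left hg hgd hd)
    _ ≤ ∫ ω, γ * g ω ∂μ := by
        refine integral_mono_ae (integrable_condExp.bdd_mul hg_ae (.of_forall hgC))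
          ((Integrable.of_bound hg_ae C (.of_forall hgC)).const_mul γ) ?_
        filter_upwards [hdγ] with ω hω
        rw [mul_comm γ]
        exact mul_le_mul_of_nonneg_left hω (hg0 ω)
    _ = γ * ∫ ω, g ω ∂μ := integral_const_mul γ _

theorem integral_exp_neg_le_of_condExp_le {X Y : Ω → ℝ} {γ : ℝ} (hm : m ≤ m0)
    (hX : Measurable[m] X) (hY : Measurable Y) (hX0 : 0 ≤ X) (hXY : X ≤ Y)
    (hγ : ∀ᵐ ω ∂μ, μ[fun ω => exp (-(Y ω - X ω)) | m] ω ≤ γ) :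
    ∫ ω, exp (-Y ω) ∂μ ≤ γ * ∫ ω, exp (-X ω) ∂μ := by
  have hexp_le_one : ∀ ω, ‖exp (-X ω)‖ ≤ 1 := fun ω => by
    simpa [abs_of_pos (exp_pos _)] using hX0 ω
  calc ∫ ω, exp (-Y ω) ∂μ = ∫ ω, exp (-X ω) * exp (-(Y ω - X ω)) ∂μ := by
        simp only [← exp_add]
        ring_nf
    _ ≤ γ * ∫ ω, exp (-X ω) ∂μ :=
        integral_mul_le_of_condExp_le hm (measurable_exp.comp hX.neg).stronglyMeasurable
          (fun ω => (exp_pos _).le) hexp_le_one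
          (integrable_exp_neg_of_nonneg (hY.sub (hX.mono hm le_rfl)) (sub_nonneg.2 <| hXY ·)) hγ

end

theorem exponential_tail_of_increments_general {Ω : Type*} [m0 : MeasurableSpace Ω]
    (μ : Measure Ω) [IsProbabilityMeasure μ]
    (K : ℕ) (F : ℕ → MeasurableSpace Ω)
    (hFle : ∀ n, F n ≤ m0)
    (τ : ℕ → Ω → ℝ)
    (hτ0 : ∀ ω, τ 0 ω = 0)
    (hτmono : ∀ n < K, ∀ ω, τ n ω ≤ τ (n + 1) ω)
    (hτmeas : ∀ n ≤ K, Measurable[F n] (τ n))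
    (γ : ℝ) (hγ0 : 0 < γ)
    (hexp : ∀ n < K, ∀ᵐ ω ∂μ,
      (μ[fun ω' => Real.exp (-(τ (n + 1) ω' - τ n ω')) | F n]) ω ≤ γ)
    (T : ℝ) :
    (μ {ω | τ K ω ≤ T}).toReal ≤ Real.exp T * γ ^ K := by
  have hτ_nonneg : ∀ n ≤ K, 0 ≤ τ n := by
    intro n hn
    induction n with
    | zero => exact fun ω => (hτ0 ω).ge
    | succ n ih => exact fun ω => (ih (by omega) ω).trans (hτmono n hn ω)
  have hτ_meas : ∀ n ≤ K, Measurable (τ n) := fun n hn => (hτmeas n hn).mono (hFle n) le_rfl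
  have hmoment : ∫ ω, exp (-τ K ω) ∂μ ≤ γ ^ K := by
    simpa [hτ0] using le_geom (u := fun n => ∫ ω, exp (-τ n ω) ∂μ) hγ0.le K fun n hn =>
      integral_exp_neg_le_of_condExp_le (hFle n) (hτmeas n hn.le) (hτ_meas _ hn)
        (hτ_nonneg n hn.le) (hτmono n hn) (hexp n hn)
  calc (μ {ω | τ K ω ≤ T}).toReal ≤ exp T * mgf (τ K) μ (-1) := by
        simpa [measureReal_def] using measure_le_le_exp_mul_mgf (X := τ K) (μ := μ) T
          (by norm_num : (-1 : ℝ) ≤ 0)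
          (by simpa using integrable_exp_neg_of_nonneg (hτ_meas K le_rfl) (hτ_nonneg K le_rfl))
    _ ≤ exp T * γ ^ K := by
        gcongr
        simpa [mgf] using hmoment

/-- Iterated exponential-moment bound for stopping-time increments: if
`0 = τ₀ ≤ τ₁ ≤ ... ≤ τ_K` is adapted to a filtration `F₀ ⊆ ... ⊆ F_K` and
`E[e^{-(τ_{n+1} - τ_n)} | F_n] ≤ γ` a.s. for every `n < K`, then
`P[τ_K ≤ T] ≤ e^T γ^K`. -/
theorem exponential_tail_of_increments {Ω : Type*} [m0 : MeasurableSpace Ω]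
    (μ : Measure Ω) [IsProbabilityMeasure μ]
    (K : ℕ) (F : ℕ → MeasurableSpace Ω)
    (hFle : ∀ n, F n ≤ m0) (hFmono : Monotone F)
    (τ : ℕ → Ω → ℝ)
    (hτ0 : ∀ ω, τ 0 ω = 0)
    (hτmono : ∀ n < K, ∀ ω, τ n ω ≤ τ (n + 1) ω)
    (hτmeas : ∀ n ≤ K, Measurable[F n] (τ n))
    (γ : ℝ) (hγ0 : 0 < γ) (hγ1 : γ ≤ 1)
    (hexp : ∀ n < K, ∀ᵐ ω ∂μ,
      (μ[fun ω' => Real.exp (-(τ (n + 1) ω' - τ n ω')) | F n]) ω ≤ γ)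
    (T : ℝ) (hT : 0 ≤ T) :
    (μ {ω | τ K ω ≤ T}).toReal ≤ Real.exp T * γ ^ K :=
  exponential_tail_of_increments_general (m0 := m0) μ K F hFle τ hτ0 hτmono hτmeas γ hγ0 hexp T
end

section
/- Let R : ℝ² → ℝ be a Schwartz function (smooth with all derivatives rapidly decaying) that is even: R(−y) = R(y) for all y. For v ∈ ℝ² \ {0} define the diffusion matrix D_{mn}(v) = −(1/(2‖v‖)) ∫_{−∞}^{∞} ∂²_{y_m y_n} R(s v̂) ds for m, n ∈ {1,2}, and the drift E_m(v) = −(1/‖v‖²) ∫_0^{∞} s · (Δ ∂_{y_m} R)(s v̂) ds, where v̂ = v/‖v‖ and Δ is the Laplacian on ℝ². Then the functions D_{mn} are continuously differentiable on ℝ² \ {0} and for every v ≠ 0 and m ∈ {1,2}, Σ_{n=1}^{2} ∂_{v_n} D_{mn}(v) = E_m(v). -/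
/-!
For `v ≠ 0` the substitution `s = t ‖v‖` turns `D_{mn}(v)` into `-½ ∫ ∂_n ∂_m R(t v) dt`, a line
integral of a Schwartz function, which decays along lines uniformly for `v` away from the origin
and can therefore be differentiated under the integral sign; `∂_{v_n}` brings down a factor `t`.
Summing over `n` gives `-½ ∫ t (Δ ∂_m R)(t v) dt`. Since `R` is even, `Δ ∂_m R` is odd, so the
integrand is even, the integral is twice the one over `t > 0`, and rescaling `t = s / ‖v‖` gives
`E_m(v)`.
-/

open MeasureTheory LineDeriv Laplacian

theorem integrable_one_add_norm_rpow_neg_two (C : ℝ) :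
    Integrable fun t : ℝ => C * (1 + ‖t‖) ^ (-2 : ℝ) :=
  (integrable_one_add_norm (by norm_num)).const_mul C

theorem norm_smul_le_of_one_add_norm_mul_le {F : Type*} [NormedAddCommGroup F] [NormedSpace ℝ F]
    {t : ℝ} {y : F} {B : ℝ} (h : (1 + ‖t‖) * ‖y‖ ≤ B) : ‖t • y‖ ≤ B := by
  rw [norm_smul]
  nlinarith [norm_nonneg y]

theorem integral_eq_two_mul_setIntegral_Ioi_of_even {φ : ℝ → ℝ} (hφ : Function.Even φ) :
    ∫ t, φ t = 2 * ∫ t in Set.Ioi 0, φ t := by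
  rw [← integral_comp_abs]
  congr 1 with t
  rcases abs_choice t with h | h <;> simp [h, hφ t]

theorem integral_comp_mul_inv (g : ℝ → ℝ) {c : ℝ} (hc : 0 < c) :
    ∫ s, g (s * c⁻¹) = c * ∫ t, g t := by
  simp [Measure.integral_comp_mul_right, abs_of_pos hc]

theorem setIntegral_Ioi_mul_comp_mul_inv (g : ℝ → ℝ) {c : ℝ} (hc : 0 < c) :
    ∫ s in Set.Ioi 0, s * g (s * c⁻¹) = c ^ 2 * ∫ t in Set.Ioi 0, t * g t := by
  have h := integral_comp_mul_right_Ioi (fun t => t * g t) 0 (inv_pos.mpr hc)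
  simp only [zero_mul, inv_inv, smul_eq_mul] at h
  calc ∫ s in Set.Ioi 0, s * g (s * c⁻¹) = c * ∫ s in Set.Ioi 0, s * c⁻¹ * g (s * c⁻¹) := by
        rw [← integral_const_mul]
        congr 1 with s
        field_simp
    _ = c ^ 2 * ∫ t in Set.Ioi 0, t * g t := by rw [h]; ring

namespace SchwartzMap

section NormedSpace

variable {E F : Type*} [NormedAddCommGroup E] [NormedSpace ℝ E]
  [NormedAddCommGroup F] [NormedSpace ℝ F]

theorem exists_one_add_norm_mul_norm_comp_smul_le (f : 𝓢(E, F)) {c : ℝ} (hc : 0 < c) :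
    ∃ C, ∀ (t : ℝ) (x : E), c ≤ ‖x‖ →
      (1 + ‖t‖) * ‖f (t • x)‖ ≤ C * (1 + ‖t‖) ^ (-2 : ℝ) := by
  set S := (Finset.Iic (3, 0)).sup (fun m => SchwartzMap.seminorm ℝ m.1 m.2) f
  set δ := min 1 c
  have hδ : 0 < δ := lt_min one_pos hc
  refine ⟨2 ^ 3 * S / δ ^ 3, fun t x hx => ?_⟩
  have hstretch : δ * (1 + ‖t‖) ≤ 1 + ‖t • x‖ := by
    rw [norm_smul]
    nlinarith [min_le_left 1 c, min_le_right 1 c, norm_nonneg t,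
      mul_le_mul_of_nonneg_left hx (norm_nonneg t)]
  have hdecay : (1 + ‖t • x‖) ^ 3 * ‖f (t • x)‖ ≤ 2 ^ 3 * S := by
    simpa [norm_iteratedFDeriv_zero] using
      one_add_le_sup_seminorm_apply (𝕜 := ℝ) (m := (3, 0)) le_rfl le_rfl f (t • x)
  have hpos : 0 < 1 + ‖t‖ := by positivity
  have hcube : (1 + ‖t‖) ^ 3 * ‖f (t • x)‖ ≤ 2 ^ 3 * S / δ ^ 3 := by
    rw [le_div_iff₀ (by positivity)]
    calc (1 + ‖t‖) ^ 3 * ‖f (t • x)‖ * δ ^ 3 = (δ * (1 + ‖t‖)) ^ 3 * ‖f (t • x)‖ := by ring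
      _ ≤ (1 + ‖t • x‖) ^ 3 * ‖f (t • x)‖ := by gcongr
      _ ≤ 2 ^ 3 * S := hdecay
  calc (1 + ‖t‖) * ‖f (t • x)‖ = (1 + ‖t‖) ^ 3 * ‖f (t • x)‖ * (1 + ‖t‖) ^ (-2 : ℝ) := by
        rw [Real.rpow_neg hpos.le, Real.rpow_two]; field_simp
    _ ≤ _ := by gcongr

theorem integrable_comp_smul (f : 𝓢(E, F)) {v : E} (hv : v ≠ 0) :
    Integrable fun t : ℝ => f (t • v) := by
  obtain ⟨C, hC⟩ := f.exists_one_add_norm_mul_norm_comp_smul_le (norm_pos_iff.mpr hv)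
  refine (integrable_one_add_norm_rpow_neg_two C).mono' (by fun_prop)
    (.of_forall fun t => le_trans ?_ (hC t v le_rfl))
  exact le_mul_of_one_le_left (norm_nonneg _) (by simp)

theorem integrable_smul_comp_smul (f : 𝓢(E, F)) {v : E} (hv : v ≠ 0) :
    Integrable fun t : ℝ => t • f (t • v) := by
  obtain ⟨C, hC⟩ := f.exists_one_add_norm_mul_norm_comp_smul_le (norm_pos_iff.mpr hv)
  exact (integrable_one_add_norm_rpow_neg_two C).mono' (by fun_prop)
    (.of_forall fun t => norm_smul_le_of_one_add_norm_mul_le (hC t v le_rfl))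

theorem hasFDerivAt_integral_comp_smul (f : 𝓢(E, F)) {v : E} (hv : v ≠ 0) :
    HasFDerivAt (fun x : E => ∫ t : ℝ, f (t • x)) (∫ t : ℝ, t • fderiv ℝ f (t • v)) v := by
  have hv' : ‖v‖ / 2 < ‖v‖ := half_lt_self (norm_pos_iff.mpr hv)
  obtain ⟨C, hC⟩ := (fderivCLM ℝ E F f).exists_one_add_norm_mul_norm_comp_smul_le
    (half_pos (norm_pos_iff.mpr hv))
  refine hasFDerivAt_integral_of_dominated_of_fderiv_le
    (F := fun x t => f (t • x)) (F' := fun x t => t • fderiv ℝ f (t • x))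
    (s := {x | ‖v‖ / 2 < ‖x‖}) (bound := fun t => C * (1 + ‖t‖) ^ (-2 : ℝ))
    ((isOpen_lt continuous_const continuous_norm).mem_nhds hv')
    (.of_forall fun x => by fun_prop) (f.integrable_comp_smul hv)
    ((fderivCLM ℝ E F f).integrable_smul_comp_smul hv).aestronglyMeasurable
    (.of_forall fun t x hx => norm_smul_le_of_one_add_norm_mul_le (hC t x (le_of_lt hx)))
    (integrable_one_add_norm_rpow_neg_two C)
    (.of_forall fun t x _ => ?_)
  simpa [Function.comp_def, ContinuousLinearMap.comp_smul] using
    (f.hasFDerivAt (t • x)).comp x ((hasFDerivAt_id x).const_smul t)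

theorem continuousOn_integral_smul_comp_smul (f : 𝓢(E, F)) :
    ContinuousOn (fun x : E => ∫ t : ℝ, t • f (t • x)) {x | x ≠ 0} := by
  intro v hv
  have hv' : ‖v‖ / 2 < ‖v‖ := half_lt_self (norm_pos_iff.mpr hv)
  obtain ⟨C, hC⟩ := f.exists_one_add_norm_mul_norm_comp_smul_le (half_pos (norm_pos_iff.mpr hv))
  refine (continuousAt_of_dominated (bound := fun t => C * (1 + ‖t‖) ^ (-2 : ℝ))
    (.of_forall fun x => by fun_prop)
    (Filter.eventually_of_mem ((isOpen_lt continuous_const continuous_norm).mem_nhds hv')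
      fun x hx => .of_forall fun t => norm_smul_le_of_one_add_norm_mul_le (hC t x (le_of_lt hx)))
    (integrable_one_add_norm_rpow_neg_two C)
    (.of_forall fun t => by fun_prop)
    ).continuousWithinAt

theorem contDiffOn_integral_comp_smul (f : 𝓢(E, F)) :
    ContDiffOn ℝ 1 (fun x : E => ∫ t : ℝ, f (t • x)) {x | x ≠ 0} := by
  rw [← zero_add (1 : WithTop ℕ∞), contDiffOn_succ_iff_fderiv_of_isOpen isOpen_ne, contDiffOn_zero]
  refine ⟨fun x hx => (f.hasFDerivAt_integral_comp_smul hx).differentiableAt.differentiableWithinAt,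
    by simp, (fderivCLM ℝ E F f).continuousOn_integral_smul_comp_smul.congr fun x hx => ?_⟩
  exact (f.hasFDerivAt_integral_comp_smul hx).fderiv

theorem fderiv_integral_comp_smul_apply (f : 𝓢(E, F)) {v : E} (hv : v ≠ 0) (w : E) :
    fderiv ℝ (fun x : E => ∫ t : ℝ, f (t • x)) v w = ∫ t : ℝ, t • ∂_{w} f (t • v) := by
  have hint : Integrable fun t : ℝ => t • fderiv ℝ f (t • v) :=
    (fderivCLM ℝ E F f).integrable_smul_comp_smul hv
  rw [(f.hasFDerivAt_integral_comp_smul hv).fderiv, ContinuousLinearMap.integral_apply hint]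
  rfl

theorem lineDerivOp_comm (f : 𝓢(E, F)) (a b : E) : ∂_{a} (∂_{b} f) = ∂_{b} (∂_{a} f) := by
  ext x
  have hsymm : IsSymmSndFDerivAt ℝ f x :=
    (f.smooth 2).contDiffAt.isSymmSndFDerivAt (by simp)
  have h := hsymm.iteratedFDeriv_cons (v := a) (w := b)
  rw [← iteratedLineDerivOp_eq_iteratedFDeriv, ← iteratedLineDerivOp_eq_iteratedFDeriv] at h
  exact h

theorem hasFDerivAt_comp_neg (f : 𝓢(E, F)) (x : E) :
    HasFDerivAt (fun y => f (-y)) (-fderiv ℝ f (-x)) x := by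
  simpa [Function.comp_def] using (f.hasFDerivAt (-x)).comp x (hasFDerivAt_id x).neg

theorem odd_lineDerivOp_of_even {f : 𝓢(E, F)} (hf : Function.Even ⇑f) (w : E) :
    Function.Odd ⇑(∂_{w} f : 𝓢(E, F)) := by
  intro x
  have h := f.hasFDerivAt_comp_neg (-x)
  rw [show (fun y => f (-y)) = f from funext hf, neg_neg] at h
  simp [lineDerivOp_apply_eq_fderiv, h.fderiv]

theorem even_lineDerivOp_of_odd {f : 𝓢(E, F)} (hf : Function.Odd ⇑f) (w : E) :
    Function.Even ⇑(∂_{w} f : 𝓢(E, F)) := by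
  intro x
  have h := (f.hasFDerivAt_comp_neg x).neg
  rw [show (-fun y => f (-y)) = f from funext fun y => by simp [hf y], neg_neg] at h
  simp [lineDerivOp_apply_eq_fderiv, h.fderiv]

end NormedSpace

section InnerProductSpace

variable {E F : Type*} [NormedAddCommGroup E] [InnerProductSpace ℝ E] [FiniteDimensional ℝ E]
  [NormedAddCommGroup F] [NormedSpace ℝ F]

theorem odd_laplacian_of_odd {f : 𝓢(E, F)} (hf : Function.Odd ⇑f) :
    Function.Odd ⇑(Δ f : 𝓢(E, F)) := by
  intro x
  simp only [laplacian_eq_sum (stdOrthonormalBasis ℝ E), sum_apply, ← Finset.sum_neg_distrib]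
  exact Finset.sum_congr rfl fun i _ => odd_lineDerivOp_of_even (even_lineDerivOp_of_odd hf _) _ x

theorem sum_fderiv_integral_lineDerivOp_comp_smul {ι : Type*} [Fintype ι]
    (b : OrthonormalBasis ι ℝ E) (f : 𝓢(E, F)) {v : E} (hv : v ≠ 0) :
    ∑ i, fderiv ℝ (fun x : E => ∫ t : ℝ, ∂_{b i} f (t • x)) v (b i) =
      ∫ t : ℝ, t • (Δ f : 𝓢(E, F)) (t • v) := by
  simp only [fderiv_integral_comp_smul_apply _ hv, laplacian_eq_sum b, sum_apply, Finset.smul_sum]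
  exact (integral_finsetSum _ fun i _ => integrable_smul_comp_smul _ hv).symm

theorem sum_fderiv_integral_lineDerivOp_comp_smul_of_odd {ι : Type*} [Fintype ι]
    (b : OrthonormalBasis ι ℝ E) {f : 𝓢(E, ℝ)} (hf : Function.Odd ⇑f) {v : E} (hv : v ≠ 0) :
    ∑ i, fderiv ℝ (fun x : E => ∫ t : ℝ, ∂_{b i} f (t • x)) v (b i) =
      2 * ∫ t in Set.Ioi 0, t * (Δ f : 𝓢(E, ℝ)) (t • v) := by
  rw [sum_fderiv_integral_lineDerivOp_comp_smul b f hv]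
  exact integral_eq_two_mul_setIntegral_Ioi_of_even fun t => by
    simp [odd_laplacian_of_odd hf (t • v)]

end InnerProductSpace

end SchwartzMap

open SchwartzMap

/-- Divergence form of the limiting momentum diffusion: for an even Schwartz correlation
function `R` on `ℝ²`, the diffusion matrix
`D_{mn}(v) = -(1/(2‖v‖)) ∫ ∂²_{y_m y_n} R(s v̂) ds` is `C¹` away from the origin and its
divergence `Σ_n ∂_{v_n} D_{mn}(v)` equals the drift
`E_m(v) = -(1/‖v‖²) ∫₀^∞ s (Δ ∂_{y_m} R)(s v̂) ds`. -/
theorem diffusion_matrix_divergence_eq_drift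
    (R : SchwartzMap (EuclideanSpace ℝ (Fin 2)) ℝ)
    (heven : ∀ y : EuclideanSpace ℝ (Fin 2), R (-y) = R y) :
    let e : Fin 2 → EuclideanSpace ℝ (Fin 2) := fun i => EuclideanSpace.single i 1
    let D : Fin 2 → Fin 2 → EuclideanSpace ℝ (Fin 2) → ℝ := fun m n v =>
      -(1 / (2 * ‖v‖)) *
        ∫ s : ℝ, fderiv ℝ (fun y => fderiv ℝ (fun z => R z) y (e n)) (s • ‖v‖⁻¹ • v) (e m)
    let Edrift : Fin 2 → EuclideanSpace ℝ (Fin 2) → ℝ := fun m v =>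
      -(1 / ‖v‖ ^ 2) * ∫ s in Set.Ioi (0 : ℝ),
        s * ∑ i : Fin 2,
          fderiv ℝ (fun y => fderiv ℝ (fun z => fderiv ℝ (fun x => R x) z (e m)) y (e i))
            (s • ‖v‖⁻¹ • v) (e i)
    (∀ m n : Fin 2, ContDiffOn ℝ 1 (D m n) {v | v ≠ 0}) ∧
    (∀ v : EuclideanSpace ℝ (Fin 2), v ≠ 0 → ∀ m : Fin 2,
      ∑ n : Fin 2, fderiv ℝ (D m n) v (e n) = Edrift m v) := by
  intro e D Edrift
  set b := EuclideanSpace.basisFun (Fin 2) ℝ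
  have hb : ∀ i, b i = e i := fun i => by simp [b, e]
  set Φ : Fin 2 → Fin 2 → EuclideanSpace ℝ (Fin 2) → ℝ :=
    fun m n x => ∫ t : ℝ, ∂_{b n} (∂_{e m} R) (t • x)
  have hD : ∀ m n, Set.EqOn (D m n) (fun v => -(1 / 2 : ℝ) * Φ m n v) {v | v ≠ 0} := by
    intro m n v hv
    change -(1 / (2 * ‖v‖)) * ∫ s : ℝ, ∂_{e m} (∂_{e n} R) (s • ‖v‖⁻¹ • v) = _
    simp only [Φ, hb, smul_smul, lineDerivOp_comm R (e m) (e n),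
      integral_comp_mul_inv (fun t => ∂_{e n} (∂_{e m} R) (t • v)) (norm_pos_iff.mpr hv)]
    field_simp [norm_ne_zero_iff.mpr hv]
  refine ⟨fun m n => ((contDiffOn_integral_comp_smul _).const_smul (-(1 / 2 : ℝ))).congr (hD m n),
    fun v hv m => ?_⟩
  set g := Δ (∂_{e m} R : 𝓢(EuclideanSpace ℝ (Fin 2), ℝ))
  have hE : Edrift m v = -(1 / ‖v‖ ^ 2) * ∫ s in Set.Ioi 0, s * g (s • ‖v‖⁻¹ • v) := by
    simp only [g, laplacian_eq_sum b, sum_apply, hb]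
    rfl
  have hdiv : ∀ n, fderiv ℝ (D m n) v (e n) = -(1 / 2 : ℝ) * fderiv ℝ (Φ m n) v (b n) := by
    intro n
    rw [((hD m n).eventuallyEq_of_mem (isOpen_ne.mem_nhds hv)).fderiv_eq,
      fderiv_const_mul (hasFDerivAt_integral_comp_smul _ hv).differentiableAt, hb]
    rfl
  calc ∑ n, fderiv ℝ (D m n) v (e n)
      = -(1 / 2 : ℝ) * ∑ n, fderiv ℝ (Φ m n) v (b n) := by simp only [hdiv, Finset.mul_sum]
    _ = -∫ t in Set.Ioi 0, t * g (t • v) := by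
        rw [show ∑ n, fderiv ℝ (Φ m n) v (b n) = 2 * ∫ t in Set.Ioi 0, t * g (t • v) from
          sum_fderiv_integral_lineDerivOp_comp_smul_of_odd b (odd_lineDerivOp_of_even heven _) hv]
        ring
    _ = Edrift m v := by
        simp only [hE, smul_smul]
        rw [setIntegral_Ioi_mul_comp_mul_inv (fun t => g (t • v)) (norm_pos_iff.mpr hv)]
        field_simp
end
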